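/- Let 𝐌 : I^p → I^p be a mean-type mapping. The function 𝓤 : I^p → ℝ defined by 𝓤(v) = limsup of the sequence O*_𝐌(v) is an 𝐌-invariant mean on I, and it is the biggest 𝐌-invariant mean: for every 𝐌-invariant mean K one has K(v) ≤ 𝓤(v) for all v ∈ I^p. -/
import Mathlib


open Filter Set Topology

/-- `M` is a mean on the interval `I` (for `p`-tuples): its value is between the
minimum and the maximum of the arguments, for every tuple with entries in `I`. -/
def IsMean (I : Set ℝ) (p : ℕ) (M : (Fin p → ℝ) → ℝ) : Prop :=
  ∀ v : Fin p → ℝ, (∀ i, v i ∈ I) →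
    sInf (Set.range v) ≤ M v ∧ M v ≤ sSup (Set.range v)

/-- A mean-type mapping: every coordinate function is a mean on `I`, and it maps
`I^p` into `I^p`. -/
def IsMeanType (I : Set ℝ) (p : ℕ) (T : (Fin p → ℝ) → Fin p → ℝ) : Prop :=
  (∀ i, IsMean I p fun v => T v i) ∧
    ∀ v : Fin p → ℝ, (∀ i, v i ∈ I) → ∀ i, T v i ∈ I

/-- The unfolded orbit `O*_𝐌(v)`: the `(n*p + i)`-th term (`0 ≤ i < p`) is the
`i`-th coordinate of `𝐌ⁿ(v)`. -/
def orbitSeq (p : ℕ) (hp : 0 < p) (T : (Fin p → ℝ) → Fin p → ℝ)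
    (v : Fin p → ℝ) : ℕ → ℝ :=
  fun k => (T^[k / p] v) ⟨k % p, Nat.mod_lt k hp⟩

/-- All iterates stay in `I` and are squeezed between the min and max of `v`. -/
lemma orbit_bounds {I : Set ℝ} {p : ℕ} (T : (Fin p → ℝ) → Fin p → ℝ)
    (hT : IsMeanType I p T) [Nonempty (Fin p)] (v : Fin p → ℝ) (hv : ∀ i, v i ∈ I) :
    ∀ n : ℕ, (∀ i, (T^[n] v) i ∈ I) ∧
      ∀ i, sInf (Set.range v) ≤ (T^[n] v) i ∧ (T^[n] v) i ≤ sSup (Set.range v) := by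
  intro n
  induction n with
  | zero =>
      refine ⟨hv, fun i => ⟨?_, ?_⟩⟩
      · exact csInf_le (Set.finite_range v).bddBelow (Set.mem_range_self i)
      · exact le_csSup (Set.finite_range v).bddAbove (Set.mem_range_self i)
  | succ n ih =>
      have h1 : ∀ i, (T^[n+1] v) i = T (T^[n] v) i := by
        intro i; rw [Function.iterate_succ_apply']
      refine ⟨fun i => ?_, fun i => ⟨?_, ?_⟩⟩
      · rw [h1]; exact hT.2 _ ih.1 i
      · rw [h1]
        have h2 := (hT.1 i (T^[n] v) ih.1).1
        refine le_trans (le_csInf (Set.range_nonempty _) ?_) h2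
        rintro x ⟨j, rfl⟩
        exact (ih.2 j).1
      · rw [h1]
        have h2 := (hT.1 i (T^[n] v) ih.1).2
        refine le_trans h2 (csSup_le (Set.range_nonempty _) ?_)
        rintro x ⟨j, rfl⟩
        exact (ih.2 j).2

lemma orbitSeq_shift {p : ℕ} (hp : 0 < p) (T : (Fin p → ℝ) → Fin p → ℝ)
    (v : Fin p → ℝ) (k : ℕ) :
    orbitSeq p hp T (T v) k = orbitSeq p hp T v (k + p) := by
  unfold orbitSeq
  have hdiv : (k + p) / p = k / p + 1 := Nat.add_div_right k hp
  have hmod : (k + p) % p = k % p := Nat.add_mod_right k p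
  have hit : T^[(k+p)/p] v = T^[k/p] (T v) := by
    rw [hdiv, Function.iterate_succ_apply]
  rw [hit]
  congr 1
  simp [Fin.mk.injEq, hmod]

lemma orbitSeq_at {p : ℕ} (hp : 0 < p) (T : (Fin p → ℝ) → Fin p → ℝ)
    (v : Fin p → ℝ) (n : ℕ) (i : Fin p) :
    orbitSeq p hp T v (i.val + n * p) = (T^[n] v) i := by
  unfold orbitSeq
  have hdiv : (i.val + n * p) / p = n := by
    rw [Nat.add_mul_div_right _ _ hp, Nat.div_eq_of_lt i.isLt, Nat.zero_add]
  have hmod : (i.val + n * p) % p = i.val := by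
    rw [Nat.add_mul_mod_self_right, Nat.mod_eq_of_lt i.isLt]
  rw [hdiv]
  congr 1
  simp [Fin.mk.injEq, hmod]

/-- `𝓤 := limsup ∘ O*_𝐌` is the biggest `𝐌`-invariant mean. -/
theorem limsup_orbit_isBiggest_invariant_mean
    {I : Set ℝ} (hne : I.Nonempty) (hI : I.OrdConnected)
    {p : ℕ} (hp : 2 ≤ p)
    (T : (Fin p → ℝ) → Fin p → ℝ) (hT : IsMeanType I p T) :
    (IsMean I p (fun v => Filter.limsup (orbitSeq p (by omega) T v) Filter.atTop) ∧
      (∀ v : Fin p → ℝ, (∀ i, v i ∈ I) →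
        Filter.limsup (orbitSeq p (by omega) T (T v)) Filter.atTop =
          Filter.limsup (orbitSeq p (by omega) T v) Filter.atTop)) ∧
    ∀ K : (Fin p → ℝ) → ℝ, IsMean I p K →
      (∀ v : Fin p → ℝ, (∀ i, v i ∈ I) → K (T v) = K v) →
      ∀ v : Fin p → ℝ, (∀ i, v i ∈ I) →
        K v ≤ Filter.limsup (orbitSeq p (by omega) T v) Filter.atTop := by
  have hp0 : 0 < p := by omega
  haveI : Nonempty (Fin p) := ⟨⟨0, hp0⟩⟩
  -- boundedness of the orbit sequence
  have hbdd : ∀ v : Fin p → ℝ, (∀ i, v i ∈ I) →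
      (∀ k, sInf (Set.range v) ≤ orbitSeq p hp0 T v k ∧
        orbitSeq p hp0 T v k ≤ sSup (Set.range v)) := by
    intro v hv k
    exact (orbit_bounds T hT v hv (k / p)).2 _
  have hBddAbove : ∀ v : Fin p → ℝ, (∀ i, v i ∈ I) →
      Filter.IsBoundedUnder (· ≤ ·) Filter.atTop (orbitSeq p hp0 T v) := by
    intro v hv
    exact isBoundedUnder_of ⟨sSup (Set.range v), fun k => (hbdd v hv k).2⟩
  have hBddBelow : ∀ v : Fin p → ℝ, (∀ i, v i ∈ I) →
      Filter.IsBoundedUnder (· ≥ ·) Filter.atTop (orbitSeq p hp0 T v) := by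
    intro v hv
    exact isBoundedUnder_of ⟨sInf (Set.range v), fun k => (hbdd v hv k).1⟩
  refine ⟨⟨?_, ?_⟩, ?_⟩
  · -- limsup is a mean
    intro v hv
    constructor
    · exact le_limsup_of_frequently_le
        (Frequently.of_forall fun k => (hbdd v hv k).1) (hBddAbove v hv)
    · exact limsup_le_of_le ((hBddBelow v hv).isCoboundedUnder_le)
        (Eventually.of_forall fun k => (hbdd v hv k).2)
  · -- invariance
    intro v hv
    have : orbitSeq p hp0 T (T v) = fun k => orbitSeq p hp0 T v (k + p) := by
      funext k; exact orbitSeq_shift hp0 T v k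
    rw [show (orbitSeq p (by omega : 0 < p) T (T v)) = orbitSeq p hp0 T (T v) from rfl, this]
    exact limsup_nat_add (orbitSeq p hp0 T v) p
  · -- maximality
    intro K hK hKinv v hv
    by_contra hlt
    push_neg at hlt
    obtain ⟨b, hb1, hb2⟩ := exists_between hlt
    have hev : ∀ᶠ k in Filter.atTop, orbitSeq p hp0 T v k < b :=
      eventually_lt_of_limsup_lt hb1 (hBddAbove v hv)
    obtain ⟨N, hN⟩ := Filter.eventually_atTop.1 hev
    -- invariance of K along the orbit
    have hKn : ∀ n : ℕ, K (T^[n] v) = K v := by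
      intro n
      induction n with
      | zero => rfl
      | succ n ih =>
          rw [Function.iterate_succ_apply', hKinv _ (orbit_bounds T hT v hv n).1, ih]
    -- choose n large so all coordinates of T^[n] v are below b
    have hcoord : ∀ i : Fin p, (T^[N] v) i < b := by
      intro i
      have := hN (i.val + N * p) (by nlinarith [i.isLt.le])
      rwa [orbitSeq_at hp0 T v N i] at this
    have hKle : K (T^[N] v) ≤ sSup (Set.range (T^[N] v)) :=
      (hK _ (orbit_bounds T hT v hv N).1).2
    have hsup : sSup (Set.range (T^[N] v)) ≤ b := by
      refine csSup_le (Set.range_nonempty _) ?_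
      rintro x ⟨j, rfl⟩
      exact (hcoord j).le
    rw [hKn N] at hKle
    linarith
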